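/- Let F(x) and G(x) be formal power series with G(x) = 1/(1 - x·F(x)). Then for every n ≥ 1, the shifted Hankel determinant H^{(1)}_n(G) equals the Hankel determinant H_n(F). -/

import Mathlib

open PowerSeries

/-- The shifted Hankel determinant `H^{(k)}_n(F)`. -/
noncomputable def hankel {R : Type*} [CommRing R] (k n : ℕ) (F : PowerSeries R) : R :=
  Matrix.det (Matrix.of fun i j : Fin n => PowerSeries.coeff (k + (i : ℕ) + (j : ℕ)) F)

/-!
Write `C = 1 - X F`, so that `G C = 1`. With `T(P)` the lower triangular Toeplitz matrix of the
first `n` coefficients of `P`, comparing the coefficient of `x^(i+k+1)` in `G C = 1` gives the matrix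
identity `H^{(1)}(G) T(C)ᵀ = T(G) H^{(0)}(F)`. Both Toeplitz matrices are unitriangular, so taking
determinants gives the theorem.
-/

open Finset Matrix

section

variable {R : Type*} [CommRing R]

noncomputable def hankelMatrix (k n : ℕ) (F : R⟦X⟧) : Matrix (Fin n) (Fin n) R :=
  of fun i j : Fin n => coeff (k + (i : ℕ) + (j : ℕ)) F

noncomputable def lowerToeplitz (n : ℕ) (P : R⟦X⟧) : Matrix (Fin n) (Fin n) R :=
  of fun i j : Fin n => if j ≤ i then coeff ((i : ℕ) - j) P else 0

theorem hankel_eq_det_hankelMatrix (k n : ℕ) (F : R⟦X⟧) :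
    hankel k n F = (hankelMatrix k n F).det :=
  rfl

theorem det_lowerToeplitz (n : ℕ) (P : R⟦X⟧) :
    (lowerToeplitz n P).det = constantCoeff P ^ n := by
  rw [det_of_isLowerTriangular (lowerToeplitz n P) fun i j hij => if_neg (not_le.mpr hij)]
  simp [lowerToeplitz]

theorem sum_fin_ite_le_eq_sum_range {n : ℕ} (h : ℕ → R) (m : Fin n) :
    ∑ j : Fin n, (if j ≤ m then h j else 0) = ∑ j ∈ range (m + 1), h j := by
  simp only [Fin.le_iff_val_le_val]
  rw [Fin.sum_univ_eq_sum_range (fun j => if j ≤ m then h j else 0), ← sum_filter]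
  congr 1
  ext j
  simp only [mem_filter, mem_range]
  omega

theorem sum_coeff_mul_coeff_one_sub_X_mul {F G : R⟦X⟧} (hG : G * (1 - X * F) = 1) (i k : ℕ) :
    ∑ j ∈ range (k + 1), coeff (1 + i + j) G * coeff (k - j) (1 - X * F) =
      ∑ t ∈ range (i + 1), coeff (i - t) G * coeff (t + k) F := by
  have hcoeff := congrArg (coeff (i + k + 1)) hG
  rw [coeff_mul, Nat.sum_antidiagonal_eq_sum_range_succ_mk,
    show (i + k + 1).succ = (i + 1) + (k + 1) by omega, sum_range_add, coeff_one,
    if_neg (by omega)] at hcoeff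
  have low : ∑ a ∈ range (i + 1), coeff a G * coeff (i + k + 1 - a) (1 - X * F) =
      -∑ t ∈ range (i + 1), coeff (i - t) G * coeff (t + k) F := by
    rw [← sum_range_reflect (fun t => coeff (i - t) G * coeff (t + k) F), ← sum_neg_distrib]
    refine sum_congr rfl fun a ha => ?_
    have ha := mem_range.mp ha
    rw [show i - (i + 1 - 1 - a) = a by omega, show i + 1 - 1 - a + k = i + k - a by omega,
      show i + k + 1 - a = i + k - a + 1 by omega, map_sub, coeff_succ_X_mul, coeff_one,
      if_neg (by omega), zero_sub, mul_neg]
  have high : ∑ j ∈ range (k + 1), coeff (i + 1 + j) G *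
      coeff (i + k + 1 - (i + 1 + j)) (1 - X * F) =
      ∑ j ∈ range (k + 1), coeff (1 + i + j) G * coeff (k - j) (1 - X * F) :=
    sum_congr rfl fun j _ => by rw [show i + k + 1 - (i + 1 + j) = k - j by omega, add_comm i]
  rw [low, high] at hcoeff
  linear_combination hcoeff

theorem hankelMatrix_mul_lowerToeplitz_transpose {F G : R⟦X⟧} (hG : G * (1 - X * F) = 1)
    (n : ℕ) :
    hankelMatrix 1 n G * (lowerToeplitz n (1 - X * F))ᵀ =
      lowerToeplitz n G * hankelMatrix 0 n F := by
  ext i k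
  simp only [mul_apply, transpose_apply, hankelMatrix, lowerToeplitz, of_apply, mul_ite,
    mul_zero, ite_mul, zero_mul, zero_add]
  rw [sum_fin_ite_le_eq_sum_range (fun j => coeff (1 + i + j) G * coeff (k - j) (1 - X * F)) k,
    sum_fin_ite_le_eq_sum_range (fun t => coeff (i - t) G * coeff (t + k) F) i]
  exact sum_coeff_mul_coeff_one_sub_X_mul hG i k

end

theorem stmt3_general {R : Type*} [CommRing R] (F G : PowerSeries R)
    (hG : G * (1 - PowerSeries.X * F) = 1) (n : ℕ) :
    hankel 1 n G = hankel 0 n F := by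
  have hG0 : constantCoeff G = 1 := by simpa using congrArg constantCoeff hG
  have hdet := congrArg det (hankelMatrix_mul_lowerToeplitz_transpose hG n)
  rw [det_mul, det_mul, det_transpose, det_lowerToeplitz, det_lowerToeplitz, hG0] at hdet
  simpa [hankel_eq_det_hankelMatrix] using hdet

theorem stmt3 {R : Type*} [CommRing R] (F G : PowerSeries R)
    (hG : G * (1 - PowerSeries.X * F) = 1) (n : ℕ) (hn : 1 ≤ n) :
    hankel 1 n G = hankel 0 n F :=
  stmt3_general F G hG n
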